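/- arXiv:0708.1901 — 4 statements merged into one kernel-verified Lean document; each statement's English description precedes it below -/
import Mathlib

section
/- For every integer m ≥ 1, every N ∈ ℕ and all constants c₀, c₁, λ > 0 and γ > m, there exists B₀ > 0 with the following property: for every design problem (𝒳, ℬ, f, ℓ, (ξ[β])_{β∈ℬ}) as in the context that satisfies condition (2.4/3.1) with constants c₁, γ, condition (2.5) with constant λ, and condition (2.9) with constant c₀, if ℓ(β_max) − ℓ(β_min) ≥ B₀, then every design ξ* maximizing the standardized maximin D-criterion Φ over all designs is supported at more than N points. -/
open scoped BigOperators

/-- An approximate design: a finitely supported probability measure on `X`,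
given by its support points and positive weights summing to one. -/
structure Design (X : Type*) where
  support : Finset X
  w : X → ℝ
  w_pos : ∀ x ∈ support, 0 < w x
  w_zero : ∀ x ∉ support, w x = 0
  sum_one : ∑ x ∈ support, w x = 1

/-- Information matrix `M(ξ,β) = ∑ₖ wₖ f(xₖ,β) f(xₖ,β)ᵀ`. -/
noncomputable def infoMat {X : Type*} {m : ℕ} (f : X → ℝ → Fin m → ℝ)
    (ξ : Design X) (β : ℝ) : Matrix (Fin m) (Fin m) ℝ :=
  ∑ x ∈ ξ.support, ξ.w x • Matrix.vecMulVec (f x β) (f x β)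

/-- `I_m(x₁,…,x_m,β) = det[f(x₁,β) ⋯ f(x_m,β)]²`. -/
noncomputable def detIm {X : Type*} {m : ℕ} (f : X → ℝ → Fin m → ℝ)
    (xs : Fin m → X) (β : ℝ) : ℝ :=
  (Matrix.det (Matrix.of fun i j => f (xs j) β i)) ^ 2

/-!
By Cauchy–Binet, `m! · det M(ξ, β)` is the `ξ^⊗m`-average of `I_m(x₁, …, x_m, β)`. Through (2.9)
and (2.4), `Φ(ξ)` is therefore at most `c₀ m c₁ δ^(-γ)` as soon as some `β` has `ℓ(β)` at distance
`≥ δ` from the `ℓ`-values of the witnesses `β̃⁽ʲ⁾` attached to the `m`-tuples of support points of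
`ξ`. If `ξ` has at most `N` points there are at most `N^m m` such values, and pigeonhole on
`N^m m + 1` equally spaced probes finds such a `β` with `δ = L / (2 (N^m m + 1))`, where
`L = ℓ(β_max) - ℓ(β_min)`. On the other hand, by (2.5) the uniform mixture of the `ξ[β]` over a
`λ`-net of scale values has `Φ ≥ (L/λ + 1)^(-m) / 2`. Since `γ > m`, the bound `O(L^(-γ))` drops
below `Ω(L^(-m))` for large `L`, so a maximin optimal design needs more than `N` points.
-/

open Finset Matrix Filter

section CauchyBinet

variable {R n X : Type*} [CommRing R] [Fintype n] [DecidableEq n]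

theorem det_of_sum_smul (s : Finset X) (a : n → X → R) (v : X → n → R) :
    (of fun i => ∑ x ∈ s, a i x • v x).det =
      ∑ g ∈ Fintype.piFinset fun _ => s, (∏ i, a i (g i)) * (of fun i => v (g i)).det := by
  change detRowAlternating.toMultilinearMap (fun i => ∑ x ∈ s, a i x • v x) = _
  rw [MultilinearMap.map_sum_finset]
  refine sum_congr rfl fun g _ => ?_
  rw [MultilinearMap.map_smul_univ]
  rfl

theorem det_of_comp_eq_sum_sign_mul_prod (v : X → n → R) (g : n → X) :
    (of fun i => v (g i)).det = ∑ σ : Equiv.Perm n, Equiv.Perm.sign σ • ∏ i, v (g i) (σ i) := by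
  rw [← det_transpose, det_apply]
  rfl

theorem sum_prod_diag_mul_det_eq (s : Finset X) (w : X → R) (v : X → n → R)
    (σ : Equiv.Perm n) :
    ∑ g ∈ Fintype.piFinset fun _ => s, (∏ i, w (g i) * v (g i) i) * (of fun i => v (g i)).det =
      ∑ g ∈ Fintype.piFinset fun _ => s,
        (∏ i, w (g i)) * (of fun i => v (g i)).det * (Equiv.Perm.sign σ • ∏ i, v (g i) (σ i)) := by
  refine sum_nbij' (· ∘ σ) (· ∘ σ.symm) (fun g hg => by simp_all [Fintype.mem_piFinset])
    (fun g hg => by simp_all [Fintype.mem_piFinset]) (fun g _ => by ext; simp)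
    (fun g _ => by ext; simp) fun g _ => ?_
  have hdet : (of fun i => v ((g ∘ σ) i)).det =
      (Equiv.Perm.sign σ : ℤ) * (of fun i => v (g i)).det :=
    det_permute σ (of fun i => v (g i))
  have hsign : ((Equiv.Perm.sign σ : ℤ) : R) * (Equiv.Perm.sign σ : ℤ) = 1 := by
    rw [← Int.cast_mul, ← Units.val_mul, Int.units_mul_self, Units.val_one, Int.cast_one]
  have hw : ∏ i, w ((g ∘ σ) i) = ∏ i, w (g i) := Equiv.prod_comp σ fun i => w (g i)
  have hv : ∏ i, v ((g ∘ σ) i) (σ i) = ∏ i, v (g i) i := Equiv.prod_comp σ fun i => v (g i) i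
  rw [hdet, hw, hv, prod_mul_distrib, Units.smul_def, zsmul_eq_mul]
  linear_combination -((∏ i, w (g i)) * (∏ i, v (g i) i) * (of fun i => v (g i)).det) * hsign

/-- Cauchy–Binet for a weighted Gram sum: averaging the multilinear expansion of the determinant
over the reindexings `g ↦ g ∘ σ` turns its diagonal products into a second copy of the
determinant. -/
theorem factorial_smul_det_sum_smul_vecMulVec (s : Finset X) (w : X → R) (v : X → n → R) :
    (Fintype.card n).factorial • (∑ x ∈ s, w x • vecMulVec (v x) (v x)).det =
      ∑ g ∈ Fintype.piFinset fun _ => s, (∏ i, w (g i)) * (of fun i => v (g i)).det ^ 2 := by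
  have hrows : ∑ x ∈ s, w x • vecMulVec (v x) (v x) =
      of fun i => ∑ x ∈ s, (w x * v x i) • v x := by
    ext i j
    simp only [Matrix.sum_apply, Matrix.smul_apply, vecMulVec_apply, of_apply, Finset.sum_apply,
      Pi.smul_apply, smul_eq_mul, mul_assoc]
  rw [hrows, det_of_sum_smul, ← Fintype.card_perm, ← card_univ, ← sum_const]
  rw [sum_congr rfl fun σ _ => sum_prod_diag_mul_det_eq s w v σ, sum_comm]
  refine sum_congr rfl fun g _ => ?_
  rw [← mul_sum, ← det_of_comp_eq_sum_sign_mul_prod, mul_assoc, sq]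

end CauchyBinet

section Design

variable {X : Type*} {m : ℕ}

theorem Design.w_nonneg (ξ : Design X) (x : X) : 0 ≤ ξ.w x := by
  by_cases hx : x ∈ ξ.support
  · exact (ξ.w_pos x hx).le
  · rw [ξ.w_zero x hx]

theorem Design.sum_w_of_support_subset (ξ : Design X) {s : Finset X} (hs : ξ.support ⊆ s) :
    ∑ x ∈ s, ξ.w x = 1 :=
  (sum_subset hs fun x _ hx => ξ.w_zero x hx).symm.trans ξ.sum_one

theorem Design.sum_prod_w (ξ : Design X) (ι : Type*) [Fintype ι] [DecidableEq ι] :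
    ∑ g ∈ Fintype.piFinset fun _ : ι => ξ.support, ∏ i, ξ.w (g i) = 1 := by
  rw [← prod_univ_sum, ξ.sum_one, prod_const_one]

open Classical in
noncomputable def Design.avg {ι : Type*} [Fintype ι] [Nonempty ι] (ξ : ι → Design X) :
    Design X where
  support := univ.biUnion fun i => (ξ i).support
  w x := (Fintype.card ι : ℝ)⁻¹ * ∑ i, (ξ i).w x
  w_pos x hx := by
    obtain ⟨i, -, hi⟩ := mem_biUnion.1 hx
    have := sum_pos' (fun j _ => (ξ j).w_nonneg x) ⟨i, mem_univ i, (ξ i).w_pos x hi⟩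
    positivity
  w_zero x hx := by
    rw [sum_eq_zero fun i _ => (ξ i).w_zero x fun hi => hx (mem_biUnion.2 ⟨i, mem_univ i, hi⟩),
      mul_zero]
  sum_one := by
    rw [← mul_sum, sum_comm, sum_congr rfl fun i _ => (ξ i).sum_w_of_support_subset
      (subset_biUnion_of_mem (fun i => (ξ i).support) (mem_univ i)), sum_const, card_univ,
      nsmul_one, inv_mul_cancel₀ (by positivity)]

theorem infoMat_eq_sum_of_support_subset (f : X → ℝ → Fin m → ℝ) (ξ : Design X) (β : ℝ)
    {s : Finset X} (hs : ξ.support ⊆ s) :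
    infoMat f ξ β = ∑ x ∈ s, ξ.w x • vecMulVec (f x β) (f x β) :=
  sum_subset hs fun x _ hx => by rw [ξ.w_zero x hx, zero_smul]

theorem detIm_eq_det_sq (f : X → ℝ → Fin m → ℝ) (xs : Fin m → X) (β : ℝ) :
    detIm f xs β = (of fun i => f (xs i) β).det ^ 2 := by
  rw [detIm, ← det_transpose]
  rfl

theorem detIm_nonneg (f : X → ℝ → Fin m → ℝ) (xs : Fin m → X) (β : ℝ) : 0 ≤ detIm f xs β :=
  sq_nonneg _

theorem factorial_mul_det_infoMat (f : X → ℝ → Fin m → ℝ) (ξ : Design X) (β : ℝ)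
    {s : Finset X} (hs : ξ.support ⊆ s) :
    m.factorial * (infoMat f ξ β).det =
      ∑ g ∈ Fintype.piFinset fun _ => s, (∏ i, ξ.w (g i)) * detIm f g β := by
  have := factorial_smul_det_sum_smul_vecMulVec s ξ.w fun x => f x β
  rw [Fintype.card_fin, nsmul_eq_mul] at this
  simp only [infoMat_eq_sum_of_support_subset f ξ β hs, this, detIm_eq_det_sq]

theorem det_infoMat_nonneg (f : X → ℝ → Fin m → ℝ) (ξ : Design X) (β : ℝ) :
    0 ≤ (infoMat f ξ β).det := by
  have hsum := factorial_mul_det_infoMat f ξ β subset_rfl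
  have : 0 ≤ m.factorial * (infoMat f ξ β).det := hsum ▸
    sum_nonneg fun g _ => mul_nonneg (prod_nonneg fun i _ => ξ.w_nonneg _) (detIm_nonneg f g β)
  exact nonneg_of_mul_nonneg_right this (by positivity)

theorem det_infoMat_le_of_forall_detIm_le (f : X → ℝ → Fin m → ℝ) (ξ : Design X) (β : ℝ)
    {C : ℝ} (h : ∀ g ∈ Fintype.piFinset fun _ => ξ.support, detIm f g β ≤ C) :
    (infoMat f ξ β).det ≤ C :=
  calc (infoMat f ξ β).det ≤ m.factorial * (infoMat f ξ β).det :=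
        le_mul_of_one_le_left (det_infoMat_nonneg f ξ β) (by exact_mod_cast m.factorial_pos)
    _ = ∑ g ∈ Fintype.piFinset fun _ => ξ.support, (∏ i, ξ.w (g i)) * detIm f g β :=
        factorial_mul_det_infoMat f ξ β subset_rfl
    _ ≤ ∑ g ∈ Fintype.piFinset fun _ => ξ.support, (∏ i, ξ.w (g i)) * C :=
        sum_le_sum fun g hg =>
          mul_le_mul_of_nonneg_left (h g hg) (prod_nonneg fun i _ => ξ.w_nonneg _)
    _ = C := by rw [← sum_mul, ξ.sum_prod_w, one_mul]

theorem pow_mul_det_infoMat_le (f : X → ℝ → Fin m → ℝ) {ξ η : Design X} (β : ℝ) {c : ℝ}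
    (hc : 0 ≤ c) (h : ∀ x, c * ξ.w x ≤ η.w x) :
    c ^ m * (infoMat f ξ β).det ≤ (infoMat f η β).det := by
  classical
  have hfac : (0 : ℝ) < m.factorial := by positivity
  refine le_of_mul_le_mul_left ?_ hfac
  rw [mul_left_comm, factorial_mul_det_infoMat f ξ β subset_union_left,
    factorial_mul_det_infoMat f η β subset_union_right, mul_sum]
  refine sum_le_sum fun g _ => ?_
  have hprod : c ^ m * ∏ i, ξ.w (g i) = ∏ i, c * ξ.w (g i) := by
    rw [prod_mul_distrib, prod_const, card_univ, Fintype.card_fin]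
  rw [← mul_assoc, hprod]
  exact mul_le_mul_of_nonneg_right
    (prod_le_prod (fun i _ => mul_nonneg hc (ξ.w_nonneg _)) fun i _ => h _) (detIm_nonneg f g β)

theorem det_infoMat_le_card_pow_mul_det_infoMat_avg (f : X → ℝ → Fin m → ℝ) {ι : Type*}
    [Fintype ι] [Nonempty ι] (ξ : ι → Design X) (i : ι) (β : ℝ) :
    (infoMat f (ξ i) β).det ≤ (Fintype.card ι : ℝ) ^ m * (infoMat f (Design.avg ξ) β).det := by
  have hcard : (0 : ℝ) < Fintype.card ι := by exact_mod_cast Fintype.card_pos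
  have hmono := pow_mul_det_infoMat_le f (ξ := ξ i) (η := Design.avg ξ) β
    (inv_nonneg.2 hcard.le) fun x => mul_le_mul_of_nonneg_left
      (single_le_sum (fun j _ => (ξ j).w_nonneg x) (mem_univ i)) (inv_nonneg.2 hcard.le)
  rwa [inv_pow, inv_mul_le_iff₀ (by positivity)] at hmono

end Design

section Criterion

variable {X : Type*} {m : ℕ} (f : X → ℝ → Fin m → ℝ) (ξopt : ℝ → Design X)

/-- `detRatio f ξopt (ξopt b) β` is the paper's `Q(β, b)`. -/
noncomputable def detRatio (ξ : Design X) (β : ℝ) : ℝ :=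
  (infoMat f ξ β).det / (infoMat f (ξopt β) β).det

noncomputable def maximinCrit (βmin βmax : ℝ) (ξ : Design X) : ℝ :=
  ⨅ β : Set.Icc βmin βmax, detRatio f ξopt ξ β

variable {f ξopt} {βmin βmax : ℝ}

theorem maximinCrit_le (hpos : ∀ β ∈ Set.Icc βmin βmax, 0 < (infoMat f (ξopt β) β).det)
    (ξ : Design X) {β : ℝ} (hβ : β ∈ Set.Icc βmin βmax) :
    maximinCrit f ξopt βmin βmax ξ ≤ detRatio f ξopt ξ β :=
  ciInf_le ⟨0, Set.forall_mem_range.2 fun β : Set.Icc βmin βmax =>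
    div_nonneg (det_infoMat_nonneg f ξ β) (hpos β β.2).le⟩ (⟨β, hβ⟩ : Set.Icc βmin βmax)

theorem le_maximinCrit (hβ : βmin ≤ βmax) {ξ : Design X} {c : ℝ}
    (h : ∀ β ∈ Set.Icc βmin βmax, c ≤ detRatio f ξopt ξ β) :
    c ≤ maximinCrit f ξopt βmin βmax ξ :=
  have : Nonempty (Set.Icc βmin βmax) := ⟨⟨βmin, le_rfl, hβ⟩⟩
  le_ciInf fun β => h β β.2

end Criterion

theorem exists_forall_le_dist_of_card_lt {α ι : Type*} [PseudoMetricSpace α] {T : Finset α}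
    {I : Finset ι} (hcard : T.card < I.card) (p : ι → α) {δ : ℝ}
    (hsep : ∀ i ∈ I, ∀ j ∈ I, i ≠ j → 2 * δ ≤ dist (p i) (p j)) :
    ∃ i ∈ I, ∀ t ∈ T, δ ≤ dist (p i) t := by
  obtain ⟨i₀, -⟩ := card_pos.1 (hcard.trans_le' (Nat.zero_le _))
  have : Nonempty α := ⟨p i₀⟩
  by_contra! hnear
  choose! t htT hclose using hnear
  obtain ⟨i, hi, j, hj, hij, htij⟩ := exists_ne_map_eq_of_card_lt_of_maps_to hcard htT
  have := hsep i hi j hj hij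
  have := dist_triangle_right (p i) (p j) (t i)
  linarith [hclose i hi, htij ▸ hclose j hj]

theorem exists_mem_Icc_forall_le_abs_sub {ℓ : ℝ → ℝ} {a b : ℝ} (hab : a ≤ b)
    (hℓ : ℓ a ≤ ℓ b) (hcont : ContinuousOn ℓ (Set.Icc a b)) {T : Finset ℝ} {K : ℕ}
    (hT : T.card ≤ K) :
    ∃ β ∈ Set.Icc a b, ∀ t ∈ T, (ℓ b - ℓ a) / (2 * (K + 1)) ≤ |ℓ β - t| := by
  set δ := (ℓ b - ℓ a) / (2 * (K + 1))
  have hδ : 0 ≤ δ := by positivity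
  have hL : ℓ b = ℓ a + 2 * (K + 1) * δ := by
    simp only [δ]
    field_simp
    ring
  obtain ⟨i, hi, hfar⟩ := exists_forall_le_dist_of_card_lt
    (I := range (K + 1)) (by simpa using Nat.lt_succ_of_le hT)
    (fun i : ℕ => ℓ a + (2 * i + 1) * δ) (δ := δ) fun i _ j _ hij => by
      have hij' : (1 : ℝ) ≤ |(i : ℝ) - j| := by
        have : (1 : ℤ) ≤ |(i : ℤ) - j| := Int.one_le_abs (sub_ne_zero.2 (by exact_mod_cast hij))
        exact_mod_cast this
      rw [Real.dist_eq, show ℓ a + (2 * i + 1) * δ - (ℓ a + (2 * j + 1) * δ) =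
        2 * δ * (i - j) by ring, abs_mul, abs_of_nonneg (by positivity)]
      exact le_mul_of_one_le_right (by positivity) hij'
  have hiK : (i : ℝ) ≤ K := by exact_mod_cast Nat.lt_succ_iff.1 (mem_range.1 hi)
  obtain ⟨β, hβ, hβi⟩ := intermediate_value_Icc hab hcont
    (⟨by nlinarith, by nlinarith⟩ : ℓ a + (2 * i + 1) * δ ∈ Set.Icc (ℓ a) (ℓ b))
  exact ⟨β, hβ, fun t ht => hβi ▸ hfar t ht⟩

theorem exists_scale_net {ℓ : ℝ → ℝ} {a b : ℝ} (hab : a ≤ b)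
    (hmono : MonotoneOn ℓ (Set.Icc a b)) (hcont : ContinuousOn ℓ (Set.Icc a b)) {lam : ℝ}
    (hlam : 0 < lam) :
    ∃ βnet : Fin (⌊(ℓ b - ℓ a) / lam⌋₊ + 1) → ℝ, (∀ j, βnet j ∈ Set.Icc a b) ∧
      ∀ β ∈ Set.Icc a b, ∃ j, |ℓ β - ℓ (βnet j)| ≤ lam := by
  have ha : a ∈ Set.Icc a b := ⟨le_rfl, hab⟩
  have hb : b ∈ Set.Icc a b := ⟨hab, le_rfl⟩
  have hnet : ∀ j : Fin (⌊(ℓ b - ℓ a) / lam⌋₊ + 1),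
      ∃ β ∈ Set.Icc a b, ℓ β = ℓ a + j * lam := by
    intro j
    have hj : (j : ℝ) ≤ (ℓ b - ℓ a) / lam :=
      (Nat.cast_le.2 (Nat.lt_succ_iff.1 j.2)).trans
        (Nat.floor_le (div_nonneg (sub_nonneg.2 (hmono ha hb hab)) hlam.le))
    rw [le_div_iff₀ hlam] at hj
    exact intermediate_value_Icc hab hcont ⟨by nlinarith, by linarith⟩
  choose βnet hβnet hℓnet using hnet
  refine ⟨βnet, hβnet, fun β hβ => ?_⟩
  have hβa : 0 ≤ (ℓ β - ℓ a) / lam := div_nonneg (sub_nonneg.2 (hmono ha hβ hβ.1)) hlam.le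
  have hk : ⌊(ℓ β - ℓ a) / lam⌋₊ < ⌊(ℓ b - ℓ a) / lam⌋₊ + 1 :=
    Nat.lt_succ_of_le (Nat.floor_le_floor (by gcongr; exact hmono hβ hb hβ.2))
  refine ⟨⟨_, hk⟩, ?_⟩
  have hlo := Nat.floor_le hβa
  have hhi := Nat.lt_floor_add_one ((ℓ β - ℓ a) / lam)
  rw [le_div_iff₀ hlam] at hlo
  rw [div_lt_iff₀ hlam] at hhi
  rw [hℓnet, abs_le]
  constructor <;> linarith

section Bounds

variable {X : Type*} {m : ℕ} {f : X → ℝ → Fin m → ℝ} {ξopt : ℝ → Design X}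

theorem detRatio_le_of_le_abs {ξ : Design X} {β t c₁ γ δ : ℝ}
    (hD : 0 < (infoMat f (ξopt β) β).det) (hγ : 0 ≤ γ) (hδ : 0 < δ) (hδt : δ ≤ |t|)
    (h24 : detRatio f ξopt ξ β * |t| ^ γ ≤ c₁) :
    detRatio f ξopt ξ β ≤ c₁ / δ ^ γ := by
  have hQ : 0 ≤ detRatio f ξopt ξ β := div_nonneg (det_infoMat_nonneg f ξ β) hD.le
  rw [le_div_iff₀ (Real.rpow_pos_of_pos hδ γ)]
  exact (mul_le_mul_of_nonneg_left (Real.rpow_le_rpow hδ.le hδt hγ) hQ).trans h24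

theorem detRatio_le_of_forall_le_abs {ℓ : ℝ → ℝ} {ξ : Design X} {β c₀ c₁ γ δ : ℝ}
    (hc₀ : 0 ≤ c₀) (hγ : 0 ≤ γ) (hδ : 0 < δ) (hD : 0 < (infoMat f (ξopt β) β).det)
    (b : (Fin m → X) → Fin m → ℝ)
    (h24 : ∀ g j, detRatio f ξopt (ξopt (b g j)) β * |ℓ β - ℓ (b g j)| ^ γ ≤ c₁)
    (h29 : ∀ g, detIm f g β ≤ c₀ * ∑ j, (infoMat f (ξopt (b g j)) β).det)
    (hfar : ∀ g ∈ Fintype.piFinset fun _ => ξ.support, ∀ j, δ ≤ |ℓ β - ℓ (b g j)|) :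
    detRatio f ξopt ξ β ≤ c₀ * m * (c₁ / δ ^ γ) := by
  rw [detRatio, div_le_iff₀ hD]
  refine det_infoMat_le_of_forall_detIm_le f ξ β fun g hg => (h29 g).trans ?_
  calc c₀ * ∑ j, (infoMat f (ξopt (b g j)) β).det
      ≤ c₀ * ∑ _j : Fin m, c₁ / δ ^ γ * (infoMat f (ξopt β) β).det := by
        gcongr with j
        rw [← div_le_iff₀ hD]
        exact detRatio_le_of_le_abs hD hγ hδ (hfar g hg j) (h24 g j)
    _ = c₀ * m * (c₁ / δ ^ γ) * (infoMat f (ξopt β) β).det := by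
        rw [sum_const, card_univ, Fintype.card_fin, nsmul_eq_mul]
        ring

variable {βmin βmax : ℝ} {ℓ : ℝ → ℝ}

theorem maximinCrit_le_of_card_support_le (hβ : βmin ≤ βmax) (hL : ℓ βmin < ℓ βmax)
    (hcont : ContinuousOn ℓ (Set.Icc βmin βmax)) {c₀ c₁ γ : ℝ} (hc₀ : 0 ≤ c₀) (hγ : 0 ≤ γ)
    (hpos : ∀ β ∈ Set.Icc βmin βmax, 0 < (infoMat f (ξopt β) β).det)
    (h24 : ∀ β ∈ Set.Icc βmin βmax, ∀ b ∈ Set.Icc βmin βmax,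
      detRatio f ξopt (ξopt b) β * |ℓ β - ℓ b| ^ γ ≤ c₁)
    (h29 : ∀ xs : Fin m → X, ∃ b : Fin m → ℝ, (∀ j, b j ∈ Set.Icc βmin βmax) ∧
      ∀ β ∈ Set.Icc βmin βmax, detIm f xs β ≤ c₀ * ∑ j, (infoMat f (ξopt (b j)) β).det)
    {ξ : Design X} {N : ℕ} (hcard : ξ.support.card ≤ N) :
    maximinCrit f ξopt βmin βmax ξ ≤
      c₀ * m * (c₁ / ((ℓ βmax - ℓ βmin) / (2 * (N ^ m * m + 1))) ^ γ) := by
  classical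
  choose b hb h29 using h29
  set T := ((Fintype.piFinset fun _ : Fin m => ξ.support) ×ˢ (univ : Finset (Fin m))).image
    fun p => ℓ (b p.1 p.2)
  have hT : T.card ≤ N ^ m * m :=
    calc T.card ≤ ξ.support.card ^ m * m := by
          refine card_image_le.trans_eq ?_
          rw [card_product, Fintype.card_piFinset_const, card_univ, Fintype.card_fin]
      _ ≤ N ^ m * m := by gcongr
  obtain ⟨β, hβT, hfar⟩ := exists_mem_Icc_forall_le_abs_sub hβ hL.le hcont hT
  refine (maximinCrit_le hpos ξ hβT).trans <| detRatio_le_of_forall_le_abs hc₀ hγ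
    (by positivity) (hpos β hβT) b (fun g j => h24 β hβT _ (hb g j))
    (fun g => h29 g β hβT) fun g hg j => ?_
  exact_mod_cast hfar _ (mem_image.2 ⟨(g, j), mem_product.2 ⟨hg, mem_univ j⟩, rfl⟩)

theorem exists_le_maximinCrit (hβ : βmin ≤ βmax) (hmono : MonotoneOn ℓ (Set.Icc βmin βmax))
    (hcont : ContinuousOn ℓ (Set.Icc βmin βmax)) {lam : ℝ} (hlam : 0 < lam)
    (hpos : ∀ β ∈ Set.Icc βmin βmax, 0 < (infoMat f (ξopt β) β).det)
    (h25 : ∀ β ∈ Set.Icc βmin βmax, ∀ b ∈ Set.Icc βmin βmax,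
      |ℓ β - ℓ b| ≤ lam → 1 / 2 ≤ detRatio f ξopt (ξopt b) β) :
    ∃ ξ : Design X,
      (2 * ((ℓ βmax - ℓ βmin) / lam + 1) ^ m)⁻¹ ≤ maximinCrit f ξopt βmin βmax ξ := by
  set r := ⌊(ℓ βmax - ℓ βmin) / lam⌋₊
  obtain ⟨βnet, hβnet, hnet⟩ := exists_scale_net hβ hmono hcont hlam
  have hr : (r : ℝ) + 1 ≤ (ℓ βmax - ℓ βmin) / lam + 1 := by
    gcongr
    exact Nat.floor_le (div_nonneg (sub_nonneg.2 (hmono ⟨le_rfl, hβ⟩ ⟨hβ, le_rfl⟩ hβ)) hlam.le)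
  refine ⟨Design.avg (ξopt ∘ βnet), le_maximinCrit hβ fun β hβI => ?_⟩
  obtain ⟨j, hj⟩ := hnet β hβI
  have hD := hpos β hβI
  have hmix := det_infoMat_le_card_pow_mul_det_infoMat_avg f (ξopt ∘ βnet) j β
  rw [Fintype.card_fin, Nat.cast_add, Nat.cast_one] at hmix
  calc (2 * ((ℓ βmax - ℓ βmin) / lam + 1) ^ m)⁻¹
      ≤ (2 * ((r : ℝ) + 1) ^ m)⁻¹ := by gcongr
    _ = 1 / 2 / ((r : ℝ) + 1) ^ m := by rw [mul_inv, one_div, div_eq_mul_inv]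
    _ ≤ detRatio f ξopt (ξopt (βnet j)) β / ((r : ℝ) + 1) ^ m := by
        gcongr
        exact h25 β hβI _ (hβnet j) hj
    _ ≤ detRatio f ξopt (Design.avg (ξopt ∘ βnet)) β := by
        rw [div_le_iff₀ (by positivity), detRatio, detRatio, div_mul_eq_mul_div, mul_comm]
        exact div_le_div_of_nonneg_right hmix hD.le

end Bounds

theorem exists_pos_forall_le_mul_pow_lt {m : ℕ} {γ : ℝ} (hγ : (m : ℝ) < γ) (A : ℝ) {a : ℝ}
    (ha : 0 < a) : ∃ B₀ : ℝ, 0 < B₀ ∧ ∀ L, B₀ ≤ L → A * (L / a + 1) ^ m < L ^ γ := by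
  obtain ⟨B, hB⟩ := eventually_atTop.1 <| (eventually_ge_atTop 1).and <|
    (tendsto_rpow_atTop (sub_pos.2 hγ)).eventually_gt_atTop (|A| * (1 / a + 1) ^ m)
  refine ⟨max B 1, by positivity, fun L hL => ?_⟩
  obtain ⟨hL1, hLA⟩ := hB L (le_of_max_le_left hL)
  have hL0 : 0 < L := by linarith
  calc A * (L / a + 1) ^ m ≤ |A| * ((1 / a + 1) * L) ^ m := by
        gcongr
        · exact le_abs_self A
        · rw [add_mul, one_div_mul_eq_div, one_mul]
          linarith
    _ = |A| * (1 / a + 1) ^ m * L ^ (m : ℝ) := by rw [mul_pow, Real.rpow_natCast]; ring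
    _ < L ^ (γ - m) * L ^ (m : ℝ) := by gcongr
    _ = L ^ γ := by rw [← Real.rpow_add hL0, sub_add_cancel]

theorem maximin_support_points_unbounded_general
    (m : ℕ) (N : ℕ) (c₀ c₁ lam γ : ℝ)
    (hc₀ : 0 < c₀) (hlam : 0 < lam) (hγ : (m : ℝ) < γ) :
    ∃ B₀ : ℝ, 0 < B₀ ∧
      ∀ (X : Type) [Nonempty X] (βmin βmax : ℝ), βmin < βmax →
        ∀ (f : X → ℝ → Fin m → ℝ) (ℓ : ℝ → ℝ) (ξopt : ℝ → Design X),
          -- ℓ is a nondecreasing continuous scale function on ℬ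
          MonotoneOn ℓ (Set.Icc βmin βmax) →
          ContinuousOn ℓ (Set.Icc βmin βmax) →
          -- local D-optimality of the designs ξ[β], with nonsingular information matrix
          (∀ β ∈ Set.Icc βmin βmax, 0 < (infoMat f (ξopt β) β).det) →
          (∀ β ∈ Set.Icc βmin βmax, ∀ ξ : Design X,
              (infoMat f ξ β).det ≤ (infoMat f (ξopt β) β).det) →
          -- condition (2.4)/(3.1):  Q(β,β̃) ≤ c₁ |ℓ(β) − ℓ(β̃)|^(−γ)
          (∀ β ∈ Set.Icc βmin βmax, ∀ b ∈ Set.Icc βmin βmax,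
              ((infoMat f (ξopt b) β).det / (infoMat f (ξopt β) β).det)
                * |ℓ β - ℓ b| ^ γ ≤ c₁) →
          -- condition (2.5):  Q(β,β̃) ≥ 1/2 whenever |ℓ(β) − ℓ(β̃)| ≤ λ
          (∀ β ∈ Set.Icc βmin βmax, ∀ b ∈ Set.Icc βmin βmax,
              |ℓ β - ℓ b| ≤ lam →
              (1 : ℝ) / 2 ≤ (infoMat f (ξopt b) β).det / (infoMat f (ξopt β) β).det) →
          -- condition (2.9)
          (∀ xs : Fin m → X, ∃ b : Fin m → ℝ,
              (∀ j, b j ∈ Set.Icc βmin βmax) ∧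
              ∀ β ∈ Set.Icc βmin βmax,
                detIm f xs β ≤ c₀ * ∑ j, (infoMat f (ξopt (b j)) β).det) →
          -- ℓ(β_max) − ℓ(β_min) sufficiently large
          B₀ ≤ ℓ βmax - ℓ βmin →
          -- any maximizer of the standardized maximin criterion Φ
          ∀ ξstar : Design X,
            (∀ ξ : Design X,
              (⨅ β : Set.Icc βmin βmax,
                  (infoMat f ξ (β : ℝ)).det / (infoMat f (ξopt (β : ℝ)) (β : ℝ)).det) ≤
              (⨅ β : Set.Icc βmin βmax,
                  (infoMat f ξstar (β : ℝ)).det / (infoMat f (ξopt (β : ℝ)) (β : ℝ)).det)) →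
            N < ξstar.support.card := by
  obtain ⟨B₀, hB₀, hlarge⟩ := exists_pos_forall_le_mul_pow_lt hγ
    (2 * (c₀ * m * c₁ * (2 * (N ^ m * m + 1)) ^ γ)) hlam
  refine ⟨B₀, hB₀, fun X _ βmin βmax hβ f ℓ ξopt hmono hcont hpos _ h24 h25 h29 hB ξstar hopt => ?_⟩
  by_contra! hcard
  set L := ℓ βmax - ℓ βmin
  have hL : 0 < L := hB₀.trans_le hB
  obtain ⟨ξ, hξ⟩ := exists_le_maximinCrit hβ.le hmono hcont hlam hpos h25
  have hupper := maximinCrit_le_of_card_support_le hβ.le (sub_pos.1 hL) hcont hc₀.le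
    ((Nat.cast_nonneg m).trans hγ.le) hpos h24 h29 hcard
  have key : (2 * (L / lam + 1) ^ m)⁻¹ ≤ c₀ * m * c₁ * (2 * (N ^ m * m + 1)) ^ γ / L ^ γ :=
    calc _ ≤ maximinCrit f ξopt βmin βmax ξ := hξ
      _ ≤ maximinCrit f ξopt βmin βmax ξstar := hopt ξ
      _ ≤ _ := hupper
      _ = _ := by rw [Real.div_rpow hL.le (by positivity)]; field_simp
  rw [le_div_iff₀ (by positivity), inv_mul_le_iff₀ (by positivity)] at key
  exact (hlarge L hB).not_ge (by linarith)

/-- For every `m ≥ 1`, `N`, and constants `c₀, c₁, λ > 0`, `γ > m`, there is `B₀ > 0` such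
that for every design problem satisfying (2.4/3.1), (2.5) and (2.9), if
`ℓ(β_max) − ℓ(β_min) ≥ B₀` then any standardized maximin `D`-optimal design has more than
`N` support points. -/
theorem maximin_support_points_unbounded
    (m : ℕ) (hm : 1 ≤ m) (N : ℕ) (c₀ c₁ lam γ : ℝ)
    (hc₀ : 0 < c₀) (hc₁ : 0 < c₁) (hlam : 0 < lam) (hγ : (m : ℝ) < γ) :
    ∃ B₀ : ℝ, 0 < B₀ ∧
      ∀ (X : Type) [Nonempty X] (βmin βmax : ℝ), βmin < βmax →
        ∀ (f : X → ℝ → Fin m → ℝ) (ℓ : ℝ → ℝ) (ξopt : ℝ → Design X),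
          -- ℓ is a nondecreasing continuous scale function on ℬ
          MonotoneOn ℓ (Set.Icc βmin βmax) →
          ContinuousOn ℓ (Set.Icc βmin βmax) →
          -- local D-optimality of the designs ξ[β], with nonsingular information matrix
          (∀ β ∈ Set.Icc βmin βmax, 0 < (infoMat f (ξopt β) β).det) →
          (∀ β ∈ Set.Icc βmin βmax, ∀ ξ : Design X,
              (infoMat f ξ β).det ≤ (infoMat f (ξopt β) β).det) →
          -- condition (2.4)/(3.1):  Q(β,β̃) ≤ c₁ |ℓ(β) − ℓ(β̃)|^(−γ)
          (∀ β ∈ Set.Icc βmin βmax, ∀ b ∈ Set.Icc βmin βmax,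
              ((infoMat f (ξopt b) β).det / (infoMat f (ξopt β) β).det)
                * |ℓ β - ℓ b| ^ γ ≤ c₁) →
          -- condition (2.5):  Q(β,β̃) ≥ 1/2 whenever |ℓ(β) − ℓ(β̃)| ≤ λ
          (∀ β ∈ Set.Icc βmin βmax, ∀ b ∈ Set.Icc βmin βmax,
              |ℓ β - ℓ b| ≤ lam →
              (1 : ℝ) / 2 ≤ (infoMat f (ξopt b) β).det / (infoMat f (ξopt β) β).det) →
          -- condition (2.9)
          (∀ xs : Fin m → X, ∃ b : Fin m → ℝ,
              (∀ j, b j ∈ Set.Icc βmin βmax) ∧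
              ∀ β ∈ Set.Icc βmin βmax,
                detIm f xs β ≤ c₀ * ∑ j, (infoMat f (ξopt (b j)) β).det) →
          -- ℓ(β_max) − ℓ(β_min) sufficiently large
          B₀ ≤ ℓ βmax - ℓ βmin →
          -- any maximizer of the standardized maximin criterion Φ
          ∀ ξstar : Design X,
            (∀ ξ : Design X,
              (⨅ β : Set.Icc βmin βmax,
                  (infoMat f ξ (β : ℝ)).det / (infoMat f (ξopt (β : ℝ)) (β : ℝ)).det) ≤
              (⨅ β : Set.Icc βmin βmax,
                  (infoMat f ξstar (β : ℝ)).det / (infoMat f (ξopt (β : ℝ)) (β : ℝ)).det)) →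
            N < ξstar.support.card :=
  maximin_support_points_unbounded_general m N c₀ c₁ lam γ hc₀ hlam hγ
end

section
/- (Lower bound (A.2), one-parameter case.) Suppose the one-parameter design problem of the context satisfies Q(β,β̃) ≥ 1/2 whenever |ℓ(β) − ℓ(β̃)| ≤ λ, for some λ > 0, and that B = ℓ(β_max) − ℓ(β_min) ≥ 4λ. Let n = ⌈B/(2λ)⌉. Then there exists a design ξ (an equal-weight mixture of n local D-optimal designs) such that M(ξ,β) ≥ (1/(2n)) M(ξ[β],β) for all β ∈ ℬ; consequently Φ(ξ) = inf_{β∈ℬ} M(ξ,β)/M(ξ[β],β) ≥ λ/(2B). -/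
open scoped BigOperators

/-- Information of a design in the one-parameter case: `M(ξ,β) = ∑ₖ wₖ I(xₖ,β)`. -/
noncomputable def info {X : Type*} (I : X → ℝ → ℝ) (ξ : Design X) (β : ℝ) : ℝ :=
  ∑ x ∈ ξ.support, ξ.w x * I x β

/-- Lower bound (A.2) in the one-parameter case: under condition (2.5), if
`B = ℓ(β_max) − ℓ(β_min) ≥ 4λ` and `n = ⌈B/(2λ)⌉`, there is a design `ξ` with
`M(ξ,β) ≥ M(ξ[β],β)/(2n)` for all `β ∈ ℬ`, whence `Φ(ξ) ≥ λ/(2B)`. -/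
theorem maximin_lower_bound_one_dim
    (X : Type*) [Nonempty X] (βmin βmax : ℝ) (hββ : βmin < βmax)
    (I : X → ℝ → ℝ) (hI : ∀ x : X, ∀ β ∈ Set.Icc βmin βmax, 0 ≤ I x β)
    (ℓ : ℝ → ℝ)
    (hmono : MonotoneOn ℓ (Set.Icc βmin βmax))
    (hcont : ContinuousOn ℓ (Set.Icc βmin βmax))
    (ξopt : ℝ → Design X)
    (hpos : ∀ β ∈ Set.Icc βmin βmax, 0 < info I (ξopt β) β)
    (hopt : ∀ β ∈ Set.Icc βmin βmax, ∀ ξ : Design X, info I ξ β ≤ info I (ξopt β) β)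
    (lam : ℝ) (hlam : 0 < lam)
    -- condition (2.5):  Q(β,β̃) ≥ 1/2 whenever |ℓ(β) − ℓ(β̃)| ≤ λ
    (h25 : ∀ β ∈ Set.Icc βmin βmax, ∀ b ∈ Set.Icc βmin βmax,
        |ℓ β - ℓ b| ≤ lam →
        (1 : ℝ) / 2 ≤ info I (ξopt b) β / info I (ξopt β) β)
    (B : ℝ) (hB : B = ℓ βmax - ℓ βmin) (hB4 : 4 * lam ≤ B)
    (n : ℕ) (hn : n = ⌈B / (2 * lam)⌉₊) :
    ∃ ξ : Design X,
      (∀ β ∈ Set.Icc βmin βmax,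
          (1 / (2 * (n : ℝ))) * info I (ξopt β) β ≤ info I ξ β) ∧
      lam / (2 * B) ≤
        ⨅ β : Set.Icc βmin βmax, info I ξ (β : ℝ) / info I (ξopt (β : ℝ)) (β : ℝ) := by
  classical
  have hBpos : 0 < B := by linarith
  have hlam2 : (0:ℝ) < 2 * lam := by linarith
  have hnpos : 0 < n := by
    rw [hn]; exact Nat.ceil_pos.2 (by positivity)
  have hnR : (0:ℝ) < (n:ℝ) := Nat.cast_pos.2 hnpos
  have hlmm : ℓ βmin ≤ ℓ βmax :=
    hmono (Set.left_mem_Icc.2 hββ.le) (Set.right_mem_Icc.2 hββ.le) hββ.le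
  have dnn : ∀ (ξ' : Design X) (x : X), 0 ≤ ξ'.w x := by
    intro ξ' x
    by_cases hx : x ∈ ξ'.support
    · exact (ξ'.w_pos x hx).le
    · simp [ξ'.w_zero x hx]
  have hivt : Set.Icc (ℓ βmin) (ℓ βmax) ⊆ ℓ '' Set.Icc βmin βmax :=
    intermediate_value_Icc hββ.le hcont
  have hchoice : ∀ j : ℕ, ∃ b, b ∈ Set.Icc βmin βmax ∧
      ℓ b = min (ℓ βmin + (2*(j:ℝ)+1)*lam) (ℓ βmax) := by
    intro j
    have hjn : (0:ℝ) ≤ (j:ℝ) := Nat.cast_nonneg j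
    have h1 : min (ℓ βmin + (2*(j:ℝ)+1)*lam) (ℓ βmax) ∈ Set.Icc (ℓ βmin) (ℓ βmax) :=
      ⟨le_min (by nlinarith) hlmm, min_le_right _ _⟩
    obtain ⟨b, hb, hbe⟩ := hivt h1
    exact ⟨b, hb, hbe⟩
  choose bf hbmem hbval using hchoice
  -- arithmetic facts about n
  have hBle : B ≤ (n:ℝ) * (2 * lam) := by
    have h1 : B / (2*lam) ≤ (n:ℝ) := by rw [hn]; exact Nat.le_ceil _
    exact (div_le_iff₀ hlam2).1 h1
  have hceil : ((n:ℝ)) < B/(2*lam) + 1 := by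
    rw [hn]; exact Nat.ceil_lt_add_one (by positivity)
  have hnlamB : (n:ℝ) * lam ≤ B := by
    have h2 : B/(2*lam) * (2*lam) = B := div_mul_cancel₀ B (ne_of_gt hlam2)
    nlinarith [mul_lt_mul_of_pos_right hceil hlam2]
  -- covering property
  have key : ∀ β ∈ Set.Icc βmin βmax, ∃ j ∈ Finset.range n, |ℓ β - ℓ (bf j)| ≤ lam := by
    intro β hβ
    have hb1 : ℓ βmin ≤ ℓ β := hmono (Set.left_mem_Icc.2 hββ.le) hβ hβ.1
    have hb2 : ℓ β ≤ ℓ βmax := hmono hβ (Set.right_mem_Icc.2 hββ.le) hβ.2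
    set s : ℝ := ℓ β - ℓ βmin with hs
    have hs0 : 0 ≤ s := by simp only [hs]; linarith
    have hsB : s ≤ B := by rw [hB]; simp only [hs]; linarith
    set f : ℕ := ⌊s / (2*lam)⌋₊ with hf
    set j : ℕ := min f (n - 1) with hj
    have hjn : j ∈ Finset.range n :=
      Finset.mem_range.2 (lt_of_le_of_lt (min_le_right _ _) (Nat.sub_lt hnpos one_pos))
    refine ⟨j, hjn, ?_⟩
    have hjf : (j:ℝ) ≤ (f:ℝ) := Nat.cast_le.2 (min_le_left _ _)
    have hfloor : (f:ℝ) ≤ s / (2*lam) := Nat.floor_le (by positivity)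
    have hlow : (j:ℝ) * (2*lam) ≤ s := (le_div_iff₀ hlam2).1 (hjf.trans hfloor)
    have hupper : ℓ β ≤ ℓ (bf j) + lam := by
      rw [hbval j]
      rcases le_or_gt (ℓ βmin + (2*(j:ℝ)+1)*lam) (ℓ βmax) with hc | hc
      · rw [min_eq_left hc]
        rcases le_or_gt f (n-1) with hfn | hfn
        · have hjef : j = f := min_eq_left hfn
          have h3 : s / (2*lam) < (f:ℝ) + 1 := Nat.lt_floor_add_one _
          have h4 : s < ((f:ℝ) + 1) * (2*lam) := (div_lt_iff₀ hlam2).1 h3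
          rw [hjef]
          simp only [hs] at h4
          linarith
        · have hjen : j = n - 1 := min_eq_right hfn.le
          have hcast : ((n-1:ℕ):ℝ) = (n:ℝ) - 1 := by
            rw [Nat.cast_sub hnpos]; simp
          rw [hjen, hcast]
          have h6 : s ≤ (n:ℝ) * (2*lam) := hsB.trans hBle
          simp only [hs] at h6
          linarith
      · rw [min_eq_right hc.le]
        linarith
    have hlower : ℓ (bf j) ≤ ℓ β + lam := by
      rw [hbval j]
      have h5 : min (ℓ βmin + (2*(j:ℝ)+1)*lam) (ℓ βmax) ≤ ℓ βmin + (2*(j:ℝ)+1)*lam :=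
        min_le_left _ _
      simp only [hs] at hlow
      linarith
    rw [abs_sub_le_iff]
    constructor <;> linarith
  -- the mixture design
  set U : Finset X := (Finset.range n).biUnion (fun j => (ξopt (bf j)).support) with hU
  have hsub : ∀ j ∈ Finset.range n, (ξopt (bf j)).support ⊆ U := by
    intro j hj x hx
    exact Finset.mem_biUnion.2 ⟨j, hj, hx⟩
  set wfun : X → ℝ := fun x => (1/(n:ℝ)) * ∑ j ∈ Finset.range n, (ξopt (bf j)).w x with hwfun
  have hwpos : ∀ x ∈ U, 0 < wfun x := by
    intro x hx
    obtain ⟨j, hj, hxj⟩ := Finset.mem_biUnion.1 hx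
    have hsumpos : 0 < ∑ j ∈ Finset.range n, (ξopt (bf j)).w x :=
      Finset.sum_pos' (fun k _ => dnn _ x) ⟨j, hj, (ξopt (bf j)).w_pos x hxj⟩
    simp only [hwfun]
    positivity
  have hwzero : ∀ x ∉ U, wfun x = 0 := by
    intro x hx
    have h0 : ∀ j ∈ Finset.range n, (ξopt (bf j)).w x = 0 := by
      intro j hj
      exact (ξopt (bf j)).w_zero x (fun hxj => hx (Finset.mem_biUnion.2 ⟨j, hj, hxj⟩))
    simp only [hwfun, Finset.sum_eq_zero h0, mul_zero]
  have hsum_full : ∀ j ∈ Finset.range n, ∀ g : X → ℝ,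
      ∑ x ∈ U, (ξopt (bf j)).w x * g x
        = ∑ x ∈ (ξopt (bf j)).support, (ξopt (bf j)).w x * g x := by
    intro j hj g
    refine (Finset.sum_subset (hsub j hj) ?_).symm
    intro x _ hx
    simp [(ξopt (bf j)).w_zero x hx]
  have hsone : ∑ x ∈ U, wfun x = 1 := by
    simp only [hwfun]
    rw [← Finset.mul_sum, Finset.sum_comm]
    have h1 : ∀ j ∈ Finset.range n, ∑ x ∈ U, (ξopt (bf j)).w x = 1 := by
      intro j hj
      have h2 := hsum_full j hj (fun _ => 1)
      simp only [mul_one] at h2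
      rw [h2, (ξopt (bf j)).sum_one]
    rw [Finset.sum_congr rfl h1, Finset.sum_const, Finset.card_range, nsmul_eq_mul, mul_one]
    field_simp
  set ξmix : Design X := ⟨U, wfun, hwpos, hwzero, hsone⟩ with hξmix
  have hinfo : ∀ β : ℝ, info I ξmix β
      = (1/(n:ℝ)) * ∑ j ∈ Finset.range n, info I (ξopt (bf j)) β := by
    intro β
    show ∑ x ∈ U, wfun x * I x β = _
    simp only [hwfun, mul_assoc]
    rw [← Finset.mul_sum]
    congr 1
    calc ∑ x ∈ U, (∑ j ∈ Finset.range n, (ξopt (bf j)).w x) * I x β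
        = ∑ x ∈ U, ∑ j ∈ Finset.range n, (ξopt (bf j)).w x * I x β := by
          refine Finset.sum_congr rfl fun x _ => ?_
          rw [Finset.sum_mul]
      _ = ∑ j ∈ Finset.range n, ∑ x ∈ U, (ξopt (bf j)).w x * I x β := Finset.sum_comm
      _ = ∑ j ∈ Finset.range n, info I (ξopt (bf j)) β := by
          refine Finset.sum_congr rfl fun j hj => ?_
          rw [hsum_full j hj]
          rfl
  have main : ∀ β ∈ Set.Icc βmin βmax,
      (1 / (2 * (n : ℝ))) * info I (ξopt β) β ≤ info I ξmix β := by
    intro β hβ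
    obtain ⟨j, hj, hjl⟩ := key β hβ
    have hD := hpos β hβ
    have hhalf := h25 β hβ (bf j) (hbmem j) hjl
    have hhalf' : (1/2) * info I (ξopt β) β ≤ info I (ξopt (bf j)) β :=
      (le_div_iff₀ hD).1 hhalf
    have hnonneg : ∀ k ∈ Finset.range n, 0 ≤ info I (ξopt (bf k)) β := by
      intro k _
      exact Finset.sum_nonneg fun x _ => mul_nonneg (dnn _ x) (hI x β hβ)
    have hsingle : info I (ξopt (bf j)) β ≤ ∑ k ∈ Finset.range n, info I (ξopt (bf k)) β :=
      Finset.single_le_sum hnonneg hj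
    rw [hinfo β]
    have h1n : (0:ℝ) < 1/(n:ℝ) := by positivity
    calc (1 / (2*(n:ℝ))) * info I (ξopt β) β
        = (1/(n:ℝ)) * ((1/2) * info I (ξopt β) β) := by ring
      _ ≤ (1/(n:ℝ)) * info I (ξopt (bf j)) β :=
          mul_le_mul_of_nonneg_left hhalf' h1n.le
      _ ≤ (1/(n:ℝ)) * ∑ k ∈ Finset.range n, info I (ξopt (bf k)) β :=
          mul_le_mul_of_nonneg_left hsingle h1n.le
  refine ⟨ξmix, main, ?_⟩
  haveI : Nonempty (Set.Icc βmin βmax) := ⟨⟨βmin, Set.left_mem_Icc.2 hββ.le⟩⟩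
  refine le_ciInf fun β => ?_
  have hβI : (β:ℝ) ∈ Set.Icc βmin βmax := β.2
  have hD : 0 < info I (ξopt (β:ℝ)) (β:ℝ) := hpos _ hβI
  have hN := main _ hβI
  rw [div_le_div_iff₀ (by linarith : (0:ℝ) < 2*B) hD]
  have hN' : info I (ξopt (β:ℝ)) (β:ℝ) ≤ 2*(n:ℝ) * info I ξmix (β:ℝ) := by
    have h := mul_le_mul_of_nonneg_left hN (by positivity : (0:ℝ) ≤ 2*(n:ℝ))
    have he : 2*(n:ℝ) * (1/(2*(n:ℝ)) * info I (ξopt (β:ℝ)) (β:ℝ))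
        = info I (ξopt (β:ℝ)) (β:ℝ) := by
      field_simp
    linarith
  have hNpos : 0 < info I ξmix (β:ℝ) := by
    have h0 : 0 < (1/(2*(n:ℝ))) * info I (ξopt (β:ℝ)) (β:ℝ) := by positivity
    linarith
  nlinarith [mul_le_mul_of_nonneg_left hN' hlam.le,
             mul_le_mul_of_nonneg_right hnlamB hNpos.le]
end

section
/- (Lower bound (A.12), general m.) Suppose the m-parameter design problem of the context satisfies Q(β,β̃) ≥ 1/2 whenever |ℓ(β) − ℓ(β̃)| ≤ λ, for some λ > 0, and that B = ℓ(β_max) − ℓ(β_min) ≥ 4λ. Let n = ⌈B/(2λ)⌉. Then there exists a design ξ (an equal-weight mixture of n local D-optimal designs) such that det M(ξ,β) ≥ (1/(2 n^m)) det M(ξ[β],β) for all β ∈ ℬ; consequently Φ(ξ) = inf_{β∈ℬ} det M(ξ,β)/det M(ξ[β],β) ≥ λ^m/(2 B^m). -/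
/-!
Cut the ℓ-range `[ℓ β_min, ℓ β_max]`, of length `B`, into `n` cells of length `B / n ≤ 2λ` and,
by the intermediate value theorem, pick a parameter `b_j` whose ℓ-value is the midpoint of the
`j`-th cell, so that every `β` is within `λ` of some `b_j` on the ℓ-scale. The equal-weight
mixture `ξ` of the designs `ξ[b_j]` has `M(ξ, β) = n⁻¹ ∑_j M(ξ[b_j], β)`, and the determinant is
monotone for the Loewner order on positive semidefinite matrices, so
`det M(ξ, β) ≥ n⁻ᵐ det M(ξ[b_j], β) ≥ n⁻ᵐ det M(ξ[β], β) / 2`. Finally `n λ < B` since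
`n = ⌈B / (2λ)⌉ < B / λ`.
-/

open scoped BigOperators

namespace Design
variable {X : Type*}

theorem w_nonneg_s5 (ξ : Design X) (x : X) : 0 ≤ ξ.w x := by
  by_cases hx : x ∈ ξ.support
  · exact (ξ.w_pos x hx).le
  · exact (ξ.w_zero x hx).ge

theorem sum_smul_eq_of_support_subset {M : Type*} [AddCommMonoid M] [Module ℝ M] (ξ : Design X)
    {s : Finset X} (hs : ξ.support ⊆ s) (F : X → M) :
    ∑ x ∈ s, ξ.w x • F x = ∑ x ∈ ξ.support, ξ.w x • F x :=
  (Finset.sum_subset hs fun x _ hx => by rw [ξ.w_zero x hx, zero_smul]).symm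

variable {ι : Type*} [Fintype ι] [Nonempty ι] [DecidableEq X]

noncomputable def uniformMix (ξ : ι → Design X) : Design X where
  support := Finset.univ.biUnion fun i => (ξ i).support
  w x := (Fintype.card ι : ℝ)⁻¹ * ∑ i, (ξ i).w x
  w_pos x hx := by
    obtain ⟨i, -, hi⟩ := Finset.mem_biUnion.mp hx
    exact mul_pos (by positivity) (Finset.sum_pos' (fun j _ => (ξ j).w_nonneg_s5 x)
      ⟨i, Finset.mem_univ i, (ξ i).w_pos x hi⟩)
  w_zero x hx := by
    simp only [Finset.mem_biUnion, Finset.mem_univ, true_and, not_exists] at hx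
    simp [fun i => (ξ i).w_zero x (hx i)]
  sum_one := by
    have hsum (i : ι) : ∑ x ∈ Finset.univ.biUnion (fun i => (ξ i).support), (ξ i).w x = 1 := by
      simpa using ((ξ i).sum_smul_eq_of_support_subset
        (Finset.subset_biUnion_of_mem (fun i => (ξ i).support) (Finset.mem_univ i))
        fun _ => (1 : ℝ)).trans (by simpa using (ξ i).sum_one)
    rw [← Finset.mul_sum, Finset.sum_comm, Finset.sum_congr rfl fun i _ => hsum i]
    simp

end Design

namespace Matrix
variable {n : Type*} [Fintype n] [DecidableEq n] {A B C : Matrix n n ℝ}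

theorem PosSemidef.one_le_det_one_add (hC : C.PosSemidef) : 1 ≤ (1 + C).det := by
  have hdiag : 1 + C = Unitary.conjStarAlgAut ℝ _ hC.1.eigenvectorUnitary
      (diagonal fun i => 1 + hC.1.eigenvalues i) := by
    conv_lhs => rw [hC.1.spectral_theorem]
    rw [← map_one (Unitary.conjStarAlgAut ℝ _ hC.1.eigenvectorUnitary), ← map_add, ← diagonal_one,
      diagonal_add]
    rfl
  rw [hdiag, Unitary.conjStarAlgAut_apply, det_mul_right_comm,
    Unitary.mul_star_self_of_mem (SetLike.coe_mem _), one_mul, det_diagonal]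
  exact Finset.one_le_prod fun i _ => le_add_of_nonneg_right (hC.eigenvalues_nonneg i)

open scoped MatrixOrder in
theorem PosSemidef.det_le_det_add (hA : A.PosSemidef) (hB : B.PosSemidef) :
    A.det ≤ (A + B).det := by
  rcases hA.det_nonneg.eq_or_lt with hzero | hpos
  · exact hzero ▸ (hA.add hB).det_nonneg
  set S := CFC.sqrt A
  have hS : S.PosSemidef := nonneg_iff_posSemidef.mp (CFC.sqrt_nonneg A)
  have hSS : S * S = A := CFC.sqrt_mul_sqrt_self A hA.nonneg
  have hSunit : IsUnit S.det := by
    refine isUnit_iff_ne_zero.mpr fun h => hpos.ne' ?_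
    rw [← hSS, det_mul, h, zero_mul]
  -- conjugating by `S⁻¹` reduces to the case `A = 1`
  have hC : (S⁻¹ * B * S⁻¹).PosSemidef := by
    have := hB.mul_mul_conjTranspose_same S⁻¹
    rwa [conjTranspose_nonsing_inv, hS.1.eq] at this
  have hAB : A + B = S * (1 + S⁻¹ * B * S⁻¹) * S := by
    rw [mul_add, add_mul, mul_one, hSS, ← mul_assoc, ← mul_assoc, mul_nonsing_inv _ hSunit,
      one_mul, mul_assoc, nonsing_inv_mul _ hSunit, mul_one]
  rw [hAB, det_mul_right_comm, det_mul, hSS]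
  exact le_mul_of_one_le_right hpos.le hC.one_le_det_one_add

end Matrix

section InfoMat
variable {X : Type*} {m : ℕ} (f : X → ℝ → Fin m → ℝ)

theorem infoMat_posSemidef (ξ : Design X) (β : ℝ) : (infoMat f ξ β).PosSemidef :=
  Matrix.posSemidef_sum _ fun x _ =>
    (Matrix.posSemidef_vecMulVec_self_star (f x β)).smul (ξ.w_nonneg_s5 x)

variable {ι : Type*} [Fintype ι] [Nonempty ι] [DecidableEq X]

theorem infoMat_uniformMix (ξ : ι → Design X) (β : ℝ) :
    infoMat f (Design.uniformMix ξ) β = (Fintype.card ι : ℝ)⁻¹ • ∑ i, infoMat f (ξ i) β := by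
  simp only [infoMat, Design.uniformMix, mul_smul, Finset.sum_smul, Finset.smul_sum]
  rw [Finset.sum_comm]
  refine Finset.sum_congr rfl fun i _ => ?_
  rw [← Finset.smul_sum, ← Finset.smul_sum]
  exact congrArg _ ((ξ i).sum_smul_eq_of_support_subset
    (Finset.subset_biUnion_of_mem (fun i => (ξ i).support) (Finset.mem_univ i)) _)

theorem le_det_infoMat_uniformMix (ξ : ι → Design X) (β : ℝ) (i : ι) :
    (Fintype.card ι : ℝ)⁻¹ ^ m * (infoMat f (ξ i) β).det ≤
      (infoMat f (Design.uniformMix ξ) β).det := by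
  classical
  rw [infoMat_uniformMix, Matrix.det_smul, Fintype.card_fin, ← Finset.add_sum_erase _ _
    (Finset.mem_univ i)]
  gcongr
  exact (infoMat_posSemidef f _ β).det_le_det_add
    (Matrix.posSemidef_sum _ fun j _ => infoMat_posSemidef f _ β)

end InfoMat

section Grid
open Set

theorem exists_fin_le_and_le_add_one {n : ℕ} (hn : 0 < n) {s : ℝ} (hs₀ : 0 ≤ s)
    (hsn : s ≤ n) : ∃ j : Fin n, (j : ℝ) ≤ s ∧ s ≤ j + 1 := by
  rcases hsn.lt_or_eq with hlt | rfl
  · exact ⟨⟨⌊s⌋₊, Nat.floor_lt hs₀ |>.mpr hlt⟩, Nat.floor_le hs₀, (Nat.lt_floor_add_one s).le⟩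
  · refine ⟨⟨n - 1, Nat.sub_lt hn one_pos⟩, ?_, ?_⟩ <;>
      simp [Nat.cast_sub (Nat.one_le_iff_ne_zero.mpr hn.ne')]

theorem exists_fin_abs_sub_midpoint_le {n : ℕ} (hn : 0 < n) {B t : ℝ} (ht : t ∈ Icc 0 B) :
    ∃ j : Fin n, |t - (2 * j + 1) * B / (2 * n)| ≤ B / (2 * n) := by
  have hnR : (0 : ℝ) < n := Nat.cast_pos.mpr hn
  rcases (ht.1.trans ht.2).eq_or_lt with rfl | hB
  · obtain rfl : t = 0 := le_antisymm ht.2 ht.1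
    exact ⟨⟨0, hn⟩, by simp⟩
  obtain ⟨j, hjs, hsj⟩ := exists_fin_le_and_le_add_one hn (s := t * n / B)
    (by have := ht.1; positivity) (by rw [div_le_iff₀ hB]; nlinarith [ht.2])
  have hscale : t - (2 * j + 1) * B / (2 * n) = (t * n / B - (j + 1 / 2)) * (B / n) := by
    field_simp
  refine ⟨j, ?_⟩
  have hhalf : |t * n / B - (j + 1 / 2)| ≤ 1 / 2 :=
    abs_sub_le_iff.mpr ⟨by linarith, by linarith⟩
  calc |t - (2 * j + 1) * B / (2 * n)| = |t * n / B - (j + 1 / 2)| * (B / n) := by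
        rw [hscale, abs_mul, abs_of_pos (div_pos hB hnR)]
    _ ≤ 1 / 2 * (B / n) := by gcongr
    _ = B / (2 * n) := by ring

theorem exists_fin_abs_sub_le_of_monotoneOn {ℓ : ℝ → ℝ} {a b : ℝ} (hab : a ≤ b)
    (hmono : MonotoneOn ℓ (Icc a b)) (hcont : ContinuousOn ℓ (Icc a b)) {n : ℕ} (hn : 0 < n) :
    ∃ c : Fin n → ℝ, (∀ j, c j ∈ Icc a b) ∧
      ∀ β ∈ Icc a b, ∃ j, |ℓ β - ℓ (c j)| ≤ (ℓ b - ℓ a) / (2 * n) := by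
  have hnR : (0 : ℝ) < n := Nat.cast_pos.mpr hn
  have hB : 0 ≤ ℓ b - ℓ a :=
    sub_nonneg.mpr (hmono (left_mem_Icc.mpr hab) (right_mem_Icc.mpr hab) hab)
  have hmid (j : Fin n) :
      ℓ a + (2 * j + 1) * (ℓ b - ℓ a) / (2 * n) ∈ Icc (ℓ a) (ℓ b) := by
    have hj : (2 * j + 1 : ℝ) ≤ 2 * n := by
      have : (j : ℝ) + 1 ≤ n := by exact_mod_cast j.2
      linarith
    constructor
    · have : 0 ≤ (2 * j + 1) * (ℓ b - ℓ a) / (2 * n) := by positivity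
      linarith
    · have : (2 * j + 1) * (ℓ b - ℓ a) / (2 * n) ≤ ℓ b - ℓ a := by
        rw [div_le_iff₀ (by positivity)]
        nlinarith
      linarith
  choose c hc hℓc using fun j => intermediate_value_Icc hab hcont (hmid j)
  refine ⟨c, hc, fun β hβ => ?_⟩
  obtain ⟨j, hj⟩ := exists_fin_abs_sub_midpoint_le hn (B := ℓ b - ℓ a) (t := ℓ β - ℓ a)
    ⟨sub_nonneg.mpr (hmono (left_mem_Icc.mpr hab) hβ hβ.1),
      sub_le_sub_right (hmono hβ (right_mem_Icc.mpr hab) hβ.2) _⟩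
  refine ⟨j, ?_⟩
  rwa [hℓc, sub_add_eq_sub_sub]

theorem div_two_mul_natCeil_le {B lam : ℝ} (hlam : 0 < lam) (hB : 0 < B) :
    B / (2 * ⌈B / (2 * lam)⌉₊) ≤ lam := by
  have hceil := Nat.le_ceil (B / (2 * lam))
  have hpos : (0 : ℝ) < ⌈B / (2 * lam)⌉₊ := Nat.cast_pos.mpr (Nat.ceil_pos.mpr (by positivity))
  rw [div_le_iff₀ (by positivity)] at hceil ⊢
  linarith

theorem natCeil_div_two_mul_mul_lt {B lam : ℝ} (hlam : 0 < lam) (hB : lam < B) :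
    ⌈B / (2 * lam)⌉₊ * lam < B := by
  have h := Nat.ceil_lt_two_mul (a := B / (2 * lam))
    (by rw [lt_div_iff₀ (by positivity)]; linarith)
  rwa [← mul_div_assoc, mul_div_mul_left B lam two_ne_zero, lt_div_iff₀ hlam] at h

theorem pow_div_two_mul_pow_le {a B : ℝ} {n : ℕ} (m : ℕ) (ha : 0 ≤ a) (hB : 0 < B) (hn : 0 < n)
    (hnB : n * a ≤ B) : a ^ m / (2 * B ^ m) ≤ 1 / (2 * (n : ℝ) ^ m) := by
  have hnR : (0 : ℝ) < n := Nat.cast_pos.mpr hn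
  have hratio : a / B ≤ 1 / n := by rw [div_le_div_iff₀ hB hnR]; linarith
  calc a ^ m / (2 * B ^ m) = (a / B) ^ m / 2 := by rw [div_pow]; ring
    _ ≤ (1 / n) ^ m / 2 := by gcongr
    _ = 1 / (2 * (n : ℝ) ^ m) := by rw [one_div_pow]; ring

end Grid

theorem maximin_lower_bound_general_general
    (X : Type*) (m : ℕ)
    (βmin βmax : ℝ) (hββ : βmin < βmax)
    (f : X → ℝ → Fin m → ℝ) (ℓ : ℝ → ℝ)
    (hmono : MonotoneOn ℓ (Set.Icc βmin βmax))
    (hcont : ContinuousOn ℓ (Set.Icc βmin βmax))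
    (ξopt : ℝ → Design X)
    (hpos : ∀ β ∈ Set.Icc βmin βmax, 0 < (infoMat f (ξopt β) β).det)
    (lam : ℝ) (hlam : 0 < lam)
    -- condition (2.5):  Q(β,β̃) ≥ 1/2 whenever |ℓ(β) − ℓ(β̃)| ≤ λ
    (h25 : ∀ β ∈ Set.Icc βmin βmax, ∀ b ∈ Set.Icc βmin βmax,
        |ℓ β - ℓ b| ≤ lam →
        (1 : ℝ) / 2 ≤ (infoMat f (ξopt b) β).det / (infoMat f (ξopt β) β).det)
    (B : ℝ) (hB : B = ℓ βmax - ℓ βmin) (hB4 : 4 * lam ≤ B)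
    (n : ℕ) (hn : n = ⌈B / (2 * lam)⌉₊) :
    ∃ ξ : Design X,
      (∀ β ∈ Set.Icc βmin βmax,
          (1 / (2 * (n : ℝ) ^ m)) * (infoMat f (ξopt β) β).det ≤ (infoMat f ξ β).det) ∧
      lam ^ m / (2 * B ^ m) ≤
        ⨅ β : Set.Icc βmin βmax,
          (infoMat f ξ (β : ℝ)).det / (infoMat f (ξopt (β : ℝ)) (β : ℝ)).det := by
  classical
  have hBpos : 0 < B := by linarith
  have hnpos : 0 < n := by rw [hn]; exact Nat.ceil_pos.mpr (by positivity)
  have hcell : B / (2 * n) ≤ lam := by rw [hn]; exact div_two_mul_natCeil_le hlam hBpos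
  have hnlam : n * lam < B := by rw [hn]; exact natCeil_div_two_mul_mul_lt hlam (by linarith)
  obtain ⟨b, hb, hcover⟩ := exists_fin_abs_sub_le_of_monotoneOn hββ.le hmono hcont hnpos
  have : Nonempty (Fin n) := ⟨⟨0, hnpos⟩⟩
  set ξ := Design.uniformMix fun j => ξopt (b j)
  have key (β) (hβ : β ∈ Set.Icc βmin βmax) :
      (1 / (2 * (n : ℝ) ^ m)) * (infoMat f (ξopt β) β).det ≤ (infoMat f ξ β).det := by
    obtain ⟨j, hj⟩ := hcover β hβ
    have hQ := h25 β hβ (b j) (hb j) (hj.trans (hB ▸ hcell))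
    have hhalf := (le_div_iff₀ (hpos β hβ)).mp hQ
    calc (1 / (2 * (n : ℝ) ^ m)) * (infoMat f (ξopt β) β).det
        = (Fintype.card (Fin n) : ℝ)⁻¹ ^ m * (1 / 2 * (infoMat f (ξopt β) β).det) := by
          rw [Fintype.card_fin, inv_pow]; ring
      _ ≤ (Fintype.card (Fin n) : ℝ)⁻¹ ^ m * (infoMat f (ξopt (b j)) β).det :=
          mul_le_mul_of_nonneg_left (by linarith) (by positivity)
      _ ≤ (infoMat f ξ β).det := le_det_infoMat_uniformMix f (fun j => ξopt (b j)) β j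
  have hratio := pow_div_two_mul_pow_le m hlam.le hBpos hnpos hnlam.le
  have : Nonempty (Set.Icc βmin βmax) := (Set.nonempty_Icc.mpr hββ.le).to_subtype
  refine ⟨ξ, key, le_ciInf fun ⟨β, hβ⟩ => ?_⟩
  rw [le_div_iff₀ (hpos β hβ)]
  exact (mul_le_mul_of_nonneg_right hratio (hpos β hβ).le).trans (key β hβ)

/-- Lower bound (A.12) for general `m`: under condition (2.5), if
`B = ℓ(β_max) − ℓ(β_min) ≥ 4λ` and `n = ⌈B/(2λ)⌉`, there is a design `ξ` with
`det M(ξ,β) ≥ det M(ξ[β],β)/(2nᵐ)` for all `β ∈ ℬ`, whence `Φ(ξ) ≥ λᵐ/(2Bᵐ)`. -/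
theorem maximin_lower_bound_general
    (X : Type*) [Nonempty X] (m : ℕ) (hm : 1 ≤ m)
    (βmin βmax : ℝ) (hββ : βmin < βmax)
    (f : X → ℝ → Fin m → ℝ) (ℓ : ℝ → ℝ)
    (hmono : MonotoneOn ℓ (Set.Icc βmin βmax))
    (hcont : ContinuousOn ℓ (Set.Icc βmin βmax))
    (ξopt : ℝ → Design X)
    (hpos : ∀ β ∈ Set.Icc βmin βmax, 0 < (infoMat f (ξopt β) β).det)
    (hopt : ∀ β ∈ Set.Icc βmin βmax, ∀ ξ : Design X,
        (infoMat f ξ β).det ≤ (infoMat f (ξopt β) β).det)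
    (lam : ℝ) (hlam : 0 < lam)
    -- condition (2.5):  Q(β,β̃) ≥ 1/2 whenever |ℓ(β) − ℓ(β̃)| ≤ λ
    (h25 : ∀ β ∈ Set.Icc βmin βmax, ∀ b ∈ Set.Icc βmin βmax,
        |ℓ β - ℓ b| ≤ lam →
        (1 : ℝ) / 2 ≤ (infoMat f (ξopt b) β).det / (infoMat f (ξopt β) β).det)
    (B : ℝ) (hB : B = ℓ βmax - ℓ βmin) (hB4 : 4 * lam ≤ B)
    (n : ℕ) (hn : n = ⌈B / (2 * lam)⌉₊) :
    ∃ ξ : Design X,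
      (∀ β ∈ Set.Icc βmin βmax,
          (1 / (2 * (n : ℝ) ^ m)) * (infoMat f (ξopt β) β).det ≤ (infoMat f ξ β).det) ∧
      lam ^ m / (2 * B ^ m) ≤
        ⨅ β : Set.Icc βmin βmax,
          (infoMat f ξ (β : ℝ)).det / (infoMat f (ξopt (β : ℝ)) (β : ℝ)).det :=
  maximin_lower_bound_general_general X m βmin βmax hββ f ℓ hmono hcont ξopt hpos lam hlam h25 B hB
    hB4 n hn
end

section
/- (Bayesian upper bound (A.13), one-parameter case, identity scale.) Suppose the one-parameter design problem of the context satisfies: (i) for every x₀ ∈ 𝒳 there exists β̃ ∈ ℬ with I(x₀,β) ≤ M(ξ[β̃],β) for all β ∈ ℬ; (ii) Q(β,β̃) ≤ c₁ exp(−|β − β̃|^γ) for all β, β̃ ∈ ℬ, with constants c₁, γ > 0; and (iii) π is a Borel probability measure on ℬ with π(S) ≥ c₃ Leb(S)/B for every Borel set S ⊆ ℬ, where B = β_max − β_min and c₃ > 0. Then every design ξ supported at at most N points satisfies Ψ_st(ξ) = ∫_ℬ log( M(ξ,β)/M(ξ[β],β) ) dπ(β) ≤ c₃ log c₁ − (c₃/(1+γ))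 · (B/(2(N+1)))^γ. -/
open scoped BigOperators ENNReal

/-- `negLog r` is `−log r` as an extended nonnegative real, with value `∞` for `r ≤ 0`.
For an efficiency ratio `r ∈ [0,1]` this encodes the (possibly infinite) Bayesian loss
`−log r`; the criterion `Ψ_st(ξ) = ∫ log r dπ` (value `−∞` allowed) equals
`−∫⁻ negLog r dπ`, so `Ψ_st(ξ) ≤ U` is expressed as `ENNReal.ofReal (−U) ≤ ∫⁻ negLog r dπ`. -/
noncomputable def negLog (r : ℝ) : ℝ≥0∞ :=
  if r ≤ 0 then ⊤ else ENNReal.ofReal (-Real.log r)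

/-
By (i) and (ii), a support point `x` of `ξ` contributes at most `c₁ exp(−|β − b x|^γ)` to the
efficiency ratio at `β`, where `b x ∈ ℬ` is the parameter provided by (i). So `−log` of the ratio
is at least `d(β)^γ − log c₁`, where `d` is the distance to the at most `N` points `b x`.
The set `{d < t}` is covered by at most `N` intervals of length `2t`, and the layer-cake formula
turns this into `∫_ℬ d^γ dβ ≥ B (B/(2(N+1)))^γ/(1+γ)`; condition (iii) transfers the bound from
Lebesgue measure to `π`.
-/

open MeasureTheory Set Metric

namespace Design

variable {X : Type*}

lemma support_nonempty (ξ : Design X) : ξ.support.Nonempty := by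
  rw [Finset.nonempty_iff_ne_empty]
  rintro h
  simpa [h] using ξ.sum_one

end Design

lemma info_le_of_forall_mem_support_le {X : Type*} {I : X → ℝ → ℝ} {ξ : Design X} {β C : ℝ}
    (h : ∀ x ∈ ξ.support, I x β ≤ C) : info I ξ β ≤ C :=
  calc info I ξ β ≤ ∑ x ∈ ξ.support, ξ.w x * C :=
        Finset.sum_le_sum fun x hx => mul_le_mul_of_nonneg_left (h x hx) (ξ.w_pos x hx).le
    _ = C := by rw [← Finset.sum_mul, ξ.sum_one, one_mul]

lemma ofReal_neg_log_le_negLog {r c : ℝ} (hrc : r ≤ c) :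
    ENNReal.ofReal (-Real.log c) ≤ negLog r := by
  unfold negLog
  split_ifs with hr
  · exact le_top
  · exact ENNReal.ofReal_le_ofReal (neg_le_neg (Real.log_le_log (not_le.1 hr) hrc))

lemma ofReal_integral_le_lintegral_ofReal {α : Type*} [MeasurableSpace α] {μ : Measure α}
    (f : α → ℝ) : ENNReal.ofReal (∫ x, f x ∂μ) ≤ ∫⁻ x, ENNReal.ofReal (f x) ∂μ := by
  by_cases hf : Integrable f μ
  · rw [integral_eq_lintegral_pos_part_sub_lintegral_neg_part hf]
    exact (ENNReal.ofReal_le_ofReal (sub_le_self _ ENNReal.toReal_nonneg)).trans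
      ENNReal.ofReal_toReal_le
  · simp [integral_undef hf]

lemma mul_setLIntegral_le_mul_setLIntegral {α : Type*} [MeasurableSpace α] {μ ν : Measure α}
    {S : Set α} (hS : MeasurableSet S) {a b : ℝ≥0∞}
    (h : ∀ T ⊆ S, MeasurableSet T → a * μ T ≤ b * ν T) (g : α → ℝ≥0∞) :
    a * ∫⁻ x in S, g x ∂μ ≤ b * ∫⁻ x in S, g x ∂ν := by
  rw [← smul_eq_mul, ← lintegral_smul_measure, ← smul_eq_mul, ← lintegral_smul_measure]
  refine lintegral_mono' (Measure.le_iff.2 fun T hT => ?_) le_rfl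
  simp only [Measure.smul_apply, Measure.restrict_apply hT, smul_eq_mul]
  exact h (T ∩ S) inter_subset_right (hT.inter hS)

lemma integral_sub_mul_mul_rpow_sub_one {γ : ℝ} (hγ : 0 < γ) (A c : ℝ) {q : ℝ} (hq : 0 ≤ q) :
    ∫ t in 0..q, (A - c * t) * t ^ (γ - 1) = A * q ^ γ / γ - c * q ^ (γ + 1) / (γ + 1) := by
  have hexp : -1 < γ - 1 := by linarith
  have hsplit : EqOn (fun t : ℝ => (A - c * t) * t ^ (γ - 1))
      (fun t => A * t ^ (γ - 1) - c * t ^ γ) (uIcc 0 q) := by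
    intro t ht
    rw [uIcc_of_le hq] at ht
    have : t ^ γ = t * t ^ (γ - 1) := by
      conv_lhs => rw [show γ = 1 + (γ - 1) by ring]
      rw [Real.rpow_add' ht.1 (by linarith), Real.rpow_one]
    simp only [this]
    ring
  rw [intervalIntegral.integral_congr hsplit, intervalIntegral.integral_sub
    ((intervalIntegral.intervalIntegrable_rpow' hexp).const_mul _)
    ((intervalIntegral.intervalIntegrable_rpow' (by linarith)).const_mul _),
    intervalIntegral.integral_const_mul, intervalIntegral.integral_const_mul,
    integral_rpow (Or.inl hexp), integral_rpow (Or.inl (by linarith)),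
    Real.zero_rpow (by linarith), Real.zero_rpow (by linarith), sub_add_cancel]
  ring

lemma volume_infDist_lt_le {F : Finset ℝ} (hF : F.Nonempty) (t : ℝ) :
    volume {β | infDist β (F : Set ℝ) < t} ≤ F.card * ENNReal.ofReal (2 * t) :=
  calc volume {β | infDist β (F : Set ℝ) < t} ≤ volume (⋃ x ∈ F, ball x t) := by
        refine measure_mono fun β hβ => ?_
        obtain ⟨y, hy, hβy⟩ := (infDist_lt_iff (Finset.coe_nonempty.2 hF)).1 hβ
        exact mem_biUnion hy hβy
    _ ≤ ∑ x ∈ F, volume (ball x t) := measure_biUnion_finset_le F _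
    _ = F.card * ENNReal.ofReal (2 * t) := by simp [Real.volume_ball]

lemma ofReal_sub_le_volume_Icc_infDist_ge {F : Finset ℝ} (hF : F.Nonempty) (a b : ℝ)
    {m : ℝ} (hm : (F.card : ℝ) ≤ m) {t : ℝ} (ht : 0 ≤ t) :
    ENNReal.ofReal (b - a - 2 * m * t)
      ≤ volume.restrict (Icc a b) {β | t ≤ infDist β (F : Set ℝ)} := by
  set G := {β | t ≤ infDist β (F : Set ℝ)}
  have hG : MeasurableSet G :=
    measurableSet_le measurable_const (continuous_infDist_pt _).measurable
  have hcard : (F.card : ℝ≥0∞) * ENNReal.ofReal (2 * t) ≤ ENNReal.ofReal (2 * m * t) := by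
    rw [← ENNReal.ofReal_natCast, ← ENNReal.ofReal_mul (Nat.cast_nonneg _), ← mul_assoc,
      mul_comm _ (2 : ℝ)]
    gcongr
  have hcover : volume (Icc a b) ≤ volume (G ∩ Icc a b) + ENNReal.ofReal (2 * m * t) :=
    calc volume (Icc a b) ≤ volume (Icc a b ∩ G) + volume (Icc a b \ G) :=
          measure_le_inter_add_sdiff _ _ _
      _ ≤ volume (G ∩ Icc a b) + volume {β | infDist β (F : Set ℝ) < t} := by
          rw [inter_comm]
          exact add_le_add le_rfl
            (measure_mono fun β hβ => show infDist β (F : Set ℝ) < t from not_le.1 hβ.2)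
      _ ≤ volume (G ∩ Icc a b) + ENNReal.ofReal (2 * m * t) :=
          add_le_add le_rfl ((volume_infDist_lt_le hF t).trans hcard)
  have hm0 : 0 ≤ m := (Nat.cast_nonneg _).trans hm
  rw [Measure.restrict_apply hG, ENNReal.ofReal_sub _ (by positivity), ← Real.volume_Icc]
  exact tsub_le_iff_right.2 hcover

lemma ofReal_le_setLIntegral_infDist_rpow {F : Finset ℝ} (hF : F.Nonempty) {a b : ℝ}
    (hab : a ≤ b) {m : ℝ} (hm : (F.card : ℝ) ≤ m) {γ : ℝ} (hγ : 0 < γ) :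
    ENNReal.ofReal ((b - a) * ((b - a) / (2 * m)) ^ γ / (1 + γ))
      ≤ ∫⁻ β in Icc a b, ENNReal.ofReal (infDist β (F : Set ℝ) ^ γ) := by
  have hm0 : 0 < m := (Nat.cast_pos.2 hF.card_pos).trans_le hm
  set q := (b - a) / (2 * m) with hq_def
  have hq : 0 ≤ q := div_nonneg (sub_nonneg.2 hab) (by positivity)
  have hmq : 2 * m * q = b - a := by rw [hq_def]; field_simp
  rw [lintegral_rpow_eq_lintegral_meas_le_mul _ (ae_of_all _ fun _ => infDist_nonneg)
    (continuous_infDist_pt _).aemeasurable hγ]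
  calc ENNReal.ofReal ((b - a) * q ^ γ / (1 + γ))
      = ENNReal.ofReal γ * ENNReal.ofReal (∫ t in 0..q, (b - a - 2 * m * t) * t ^ (γ - 1)) := by
        rw [← ENNReal.ofReal_mul hγ.le, integral_sub_mul_mul_rpow_sub_one hγ _ _ hq,
          Real.rpow_add_one' hq (by linarith), ← hmq]
        congr 1
        field_simp
        ring
    _ ≤ ENNReal.ofReal γ * ∫⁻ t in Ioc 0 q, ENNReal.ofReal ((b - a - 2 * m * t) * t ^ (γ - 1)) := by
        rw [intervalIntegral.integral_of_le hq]
        gcongr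
        exact ofReal_integral_le_lintegral_ofReal _
    _ ≤ ENNReal.ofReal γ * ∫⁻ t in Ioc 0 q,
          volume.restrict (Icc a b) {β | t ≤ infDist β (F : Set ℝ)}
            * ENNReal.ofReal (t ^ (γ - 1)) := by
        refine mul_le_mul_right (setLIntegral_mono' measurableSet_Ioc fun t ht => ?_) _
        rw [ENNReal.ofReal_mul' (Real.rpow_nonneg ht.1.le _)]
        exact mul_le_mul_left (ofReal_sub_le_volume_Icc_infDist_ge hF a b hm ht.1.le) _
    _ ≤ _ := mul_le_mul_right (lintegral_mono_set Ioc_subset_Ioi_self) _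

lemma ofReal_mul_sub_le_setLIntegral_infDist_rpow_sub {F : Finset ℝ} (hF : F.Nonempty) {a b : ℝ}
    (hab : a ≤ b) {m : ℝ} (hm : (F.card : ℝ) ≤ m) {γ : ℝ} (hγ : 0 < γ) (L : ℝ) :
    ENNReal.ofReal ((b - a) * (((b - a) / (2 * m)) ^ γ / (1 + γ) - L))
      ≤ ∫⁻ β in Icc a b, ENNReal.ofReal (infDist β (F : Set ℝ) ^ γ - L) := by
  have hint : IntegrableOn (fun β => infDist β (F : Set ℝ) ^ γ) (Icc a b) :=
    ((continuous_infDist_pt _).rpow_const fun _ => Or.inr hγ.le).integrableOn_Icc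
  have hmain : (b - a) * ((b - a) / (2 * m)) ^ γ / (1 + γ)
      ≤ ∫ β in Icc a b, infDist β (F : Set ℝ) ^ γ := by
    have hnonneg : ∀ β, 0 ≤ infDist β (F : Set ℝ) ^ γ := fun _ => Real.rpow_nonneg infDist_nonneg _
    rw [← ENNReal.ofReal_le_ofReal_iff (integral_nonneg hnonneg),
      ofReal_integral_eq_lintegral_ofReal hint (ae_of_all _ hnonneg)]
    exact ofReal_le_setLIntegral_infDist_rpow hF hab hm hγ
  refine le_trans ?_ (ofReal_integral_le_lintegral_ofReal _)
  rw [integral_sub hint (integrableOn_const measure_Icc_lt_top.ne), setIntegral_const,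
    Real.volume_real_Icc_of_le hab, smul_eq_mul, mul_sub, ← mul_div_assoc]
  gcongr

lemma info_div_le_mul_exp_neg_infDist_rpow {X : Type*} {I : X → ℝ → ℝ} {ξ : Design X}
    {b : X → ℝ} {β M c γ : ℝ} (hM : 0 < M) (hc : 0 ≤ c) (hγ : 0 ≤ γ)
    (h : ∀ x ∈ ξ.support, I x β / M ≤ c * Real.exp (-(|β - b x| ^ γ))) :
    info I ξ β / M ≤ c * Real.exp (-(infDist β (ξ.support.image b : Set ℝ) ^ γ)) := by
  rw [div_le_iff₀ hM]
  refine info_le_of_forall_mem_support_le fun x hx => ?_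
  rw [← div_le_iff₀ hM]
  refine (h x hx).trans (mul_le_mul_of_nonneg_left (Real.exp_le_exp.2 (neg_le_neg ?_)) hc)
  refine Real.rpow_le_rpow infDist_nonneg ?_ hγ
  rw [← Real.dist_eq]
  exact infDist_le_dist_of_mem (by simpa using ⟨x, hx, rfl⟩)

theorem bayesian_upper_bound_one_dim_general
    (X : Type*) (βmin βmax : ℝ) (hββ : βmin < βmax)
    (I : X → ℝ → ℝ)
    (ξopt : ℝ → Design X)
    (hpos : ∀ β ∈ Set.Icc βmin βmax, 0 < info I (ξopt β) β)
    (c₁ c₃ γ : ℝ) (hc₁ : 0 < c₁) (hc₃ : 0 < c₃) (hγ : 0 < γ)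
    -- condition (i):  I(x₀,β) ≤ M(ξ[β̃],β) for some β̃ ∈ ℬ and all β ∈ ℬ
    (h29 : ∀ x₀ : X, ∃ b ∈ Set.Icc βmin βmax,
        ∀ β ∈ Set.Icc βmin βmax, I x₀ β ≤ info I (ξopt b) β)
    -- condition (ii):  Q(β,β̃) ≤ c₁ exp(−|β − β̃|^γ)
    (h42 : ∀ β ∈ Set.Icc βmin βmax, ∀ b ∈ Set.Icc βmin βmax,
        info I (ξopt b) β / info I (ξopt β) β ≤ c₁ * Real.exp (-(|β - b| ^ γ)))
    (B : ℝ) (hB : B = βmax - βmin)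
    -- condition (iii): π is a Borel probability measure on ℬ with π(S) ≥ c₃ Leb(S)/B
    (π : MeasureTheory.Measure ℝ)
    (h43 : ∀ S : Set ℝ, S ⊆ Set.Icc βmin βmax → MeasurableSet S →
        ENNReal.ofReal c₃ * MeasureTheory.volume S ≤ ENNReal.ofReal B * π S)
    (N : ℕ) (ξ : Design X) (hcard : ξ.support.card ≤ N) :
    ENNReal.ofReal
        (-(c₃ * Real.log c₁ - c₃ / (1 + γ) * (B / (2 * ((N : ℝ) + 1))) ^ γ))
      ≤ ∫⁻ β in Set.Icc βmin βmax,
          negLog (info I ξ β / info I (ξopt β) β) ∂π := by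
  choose b hb_mem hb_le using h29
  set F := ξ.support.image b
  set g := fun β => ENNReal.ofReal (infDist β (F : Set ℝ) ^ γ - Real.log c₁)
  have hg_le : ∀ β ∈ Icc βmin βmax, g β ≤ negLog (info I ξ β / info I (ξopt β) β) := by
    intro β hβ
    have hratio := info_div_le_mul_exp_neg_infDist_rpow (ξ := ξ) (hpos β hβ) hc₁.le hγ.le fun x _ =>
      (div_le_div_of_nonneg_right (hb_le x β hβ) (hpos β hβ).le).trans (h42 β hβ (b x) (hb_mem x))
    convert ofReal_neg_log_le_negLog hratio using 2
    rw [Real.log_mul hc₁.ne' (Real.exp_pos _).ne', Real.log_exp]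
    ring
  have hvol := ofReal_mul_sub_le_setLIntegral_infDist_rpow_sub (ξ.support_nonempty.image b)
    hββ.le (m := N + 1) (by exact_mod_cast Finset.card_image_le.trans (hcard.trans N.le_succ))
    hγ (Real.log c₁)
  subst hB
  have hB : 0 < βmax - βmin := sub_pos.2 hββ
  refine (ENNReal.mul_le_mul_iff_right (ENNReal.ofReal_pos.2 hB).ne' ENNReal.ofReal_ne_top).1 ?_
  calc ENNReal.ofReal (βmax - βmin) * ENNReal.ofReal _
      = ENNReal.ofReal c₃ * ENNReal.ofReal ((βmax - βmin) *
          (((βmax - βmin) / (2 * ((N : ℝ) + 1))) ^ γ / (1 + γ) - Real.log c₁)) := by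
        rw [← ENNReal.ofReal_mul hB.le, ← ENNReal.ofReal_mul hc₃.le]
        ring_nf
    _ ≤ ENNReal.ofReal c₃ * ∫⁻ β in Icc βmin βmax, g β := mul_le_mul_right hvol _
    _ ≤ ENNReal.ofReal (βmax - βmin) * ∫⁻ β in Icc βmin βmax, g β ∂π :=
        mul_setLIntegral_le_mul_setLIntegral measurableSet_Icc h43 g
    _ ≤ _ := mul_le_mul_right (setLIntegral_mono' measurableSet_Icc hg_le) _

/-- Bayesian upper bound (A.13) in the one-parameter case with identity scale: under
conditions (i), (ii) and (iii), every design supported at at most `N` points satisfies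
`Ψ_st(ξ) ≤ c₃ log c₁ − (c₃/(1+γ))·(B/(2(N+1)))^γ`, where `B = β_max − β_min`. -/
theorem bayesian_upper_bound_one_dim
    (X : Type*) [Nonempty X] (βmin βmax : ℝ) (hββ : βmin < βmax)
    (I : X → ℝ → ℝ) (hI : ∀ x : X, ∀ β ∈ Set.Icc βmin βmax, 0 ≤ I x β)
    (hIcont : ∀ x : X, Continuous (I x))
    (ξopt : ℝ → Design X)
    (hmeas : Measurable (fun β : ℝ => info I (ξopt β) β))
    (hpos : ∀ β ∈ Set.Icc βmin βmax, 0 < info I (ξopt β) β)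
    (hopt : ∀ β ∈ Set.Icc βmin βmax, ∀ ξ : Design X, info I ξ β ≤ info I (ξopt β) β)
    (c₁ c₃ γ : ℝ) (hc₁ : 0 < c₁) (hc₃ : 0 < c₃) (hγ : 0 < γ)
    -- condition (i):  I(x₀,β) ≤ M(ξ[β̃],β) for some β̃ ∈ ℬ and all β ∈ ℬ
    (h29 : ∀ x₀ : X, ∃ b ∈ Set.Icc βmin βmax,
        ∀ β ∈ Set.Icc βmin βmax, I x₀ β ≤ info I (ξopt b) β)
    -- condition (ii):  Q(β,β̃) ≤ c₁ exp(−|β − β̃|^γ)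
    (h42 : ∀ β ∈ Set.Icc βmin βmax, ∀ b ∈ Set.Icc βmin βmax,
        info I (ξopt b) β / info I (ξopt β) β ≤ c₁ * Real.exp (-(|β - b| ^ γ)))
    (B : ℝ) (hB : B = βmax - βmin)
    -- condition (iii): π is a Borel probability measure on ℬ with π(S) ≥ c₃ Leb(S)/B
    (π : MeasureTheory.Measure ℝ) [MeasureTheory.IsProbabilityMeasure π]
    (hπsupp : π (Set.Icc βmin βmax) = 1)
    (h43 : ∀ S : Set ℝ, S ⊆ Set.Icc βmin βmax → MeasurableSet S →
        ENNReal.ofReal c₃ * MeasureTheory.volume S ≤ ENNReal.ofReal B * π S)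
    (N : ℕ) (ξ : Design X) (hcard : ξ.support.card ≤ N) :
    ENNReal.ofReal
        (-(c₃ * Real.log c₁ - c₃ / (1 + γ) * (B / (2 * ((N : ℝ) + 1))) ^ γ))
      ≤ ∫⁻ β in Set.Icc βmin βmax,
          negLog (info I ξ β / info I (ξopt β) β) ∂π :=
  bayesian_upper_bound_one_dim_general X βmin βmax hββ I ξopt hpos c₁ c₃ γ hc₁ hc₃ hγ h29 h42 B hB π
    h43 N ξ hcard
end
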